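/- Let A be a complete lattice and let f : A → A be an O-adjoint via a finitary G (hence f is monotone). Then the least fixed point of f equals the supremum ⨆_{n ∈ ℕ} f^[n] ⊥ of the finite iterates of f applied to the bottom element. -/

import Mathlib

/-!
An O-adjoint whose sets `G ψ` are finite is Scott continuous: if `f x ≤ ψ` for every `x` in a
directed set `d`, each `x` lies below one of the finitely many `χ ∈ G ψ`, and directedness forces
a single such `χ` to bound all of `d`, so `f (sup d) ≤ ψ`. Kleene's fixed point theorem then
gives the least fixed point as the supremum of the iterates on `⊥`.
-/

theorem DirectedOn.exists_mem_finset_mem_upperBounds {α : Type*} [Preorder α] {d : Set α}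
    (hd : DirectedOn (· ≤ ·) d) (hne : d.Nonempty) {s : Finset α}
    (h : ∀ x ∈ d, ∃ y ∈ s, x ≤ y) : ∃ y ∈ s, y ∈ upperBounds d := by
  by_contra! hs
  have hwit : ∀ y : s, ∃ x : d, ¬(x : α) ≤ y := fun ⟨y, hy⟩ => by
    simpa [upperBounds] using hs y hy
  choose w hw using hwit
  have := hne.to_subtype
  obtain ⟨z, hz⟩ := hd.directed_val.finite_le w
  obtain ⟨y, hy, hzy⟩ := h z z.2
  exact hw ⟨y, hy⟩ ((hz _).trans hzy)

def IsOAdjoint {α β : Type*} [Preorder α] [Preorder β] (f : α → β) (G : β → Finset α) : Prop :=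
  ∀ ρ ψ, f ρ ≤ ψ ↔ ∃ χ ∈ G ψ, ρ ≤ χ

namespace IsOAdjoint

variable {α β : Type*} [Preorder α] [Preorder β] {f : α → β} {G : β → Finset α}

theorem monotone (hf : IsOAdjoint f G) : Monotone f := fun a b hab => by
  obtain ⟨χ, hχ, hbχ⟩ := (hf b (f b)).1 le_rfl
  exact (hf a (f b)).2 ⟨χ, hχ, hab.trans hbχ⟩

theorem scottContinuous (hf : IsOAdjoint f G) : ScottContinuous f := by
  intro d hne hd a ha
  refine ⟨hf.monotone.mem_upperBounds_image ha.1, fun ψ hψ => ?_⟩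
  obtain ⟨χ, hχ, hχd⟩ := hd.exists_mem_finset_mem_upperBounds hne fun x hx =>
    (hf x ψ).1 (hψ (Set.mem_image_of_mem f hx))
  exact (hf a ψ).2 ⟨χ, hχ, ha.2 hχd⟩

end IsOAdjoint

theorem lfp_finitary_oAdjoint_eq_iSup_iterate_general {A : Type*} [CompleteLattice A]
    (G : A → Finset A) (f : A → A)
    (hG : ∀ ρ ψ : A, f ρ ≤ ψ ↔ ∃ χ ∈ G ψ, ρ ≤ χ)
    (hmono : Monotone f) :
    OrderHom.lfp ⟨f, hmono⟩ = ⨆ n : ℕ, f^[n] ⊥ :=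
  fixedPoints.lfp_eq_sSup_iterate _ (IsOAdjoint.scottContinuous (G := G) hG).ωScottContinuous

/-- In a complete lattice, the least fixed point of a finitary
O-adjoint `f` (which is monotone) equals the supremum of the iterates
`f^[n] ⊥`. -/
theorem lfp_finitary_oAdjoint_eq_iSup_iterate {A : Type*} [CompleteLattice A]
    (G : A → Finset A) (f : A → A)
    (hG : ∀ ρ ψ : A, f ρ ≤ ψ ↔ ∃ χ ∈ G ψ, ρ ≤ χ)
    (hfin : ∀ ψ : A,
      (⋂₀ {S : Set A | ψ ∈ S ∧ ∀ χ ∈ S, (G χ : Set A) ⊆ S}).Finite)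
    (hmono : Monotone f) :
    OrderHom.lfp ⟨f, hmono⟩ = ⨆ n : ℕ, f^[n] ⊥ :=
  lfp_finitary_oAdjoint_eq_iSup_iterate_general G f hG hmono
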